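/- arXiv:2604.06651 — 2 statements merged into one kernel-verified Lean document; each statement's English description precedes it below -/
import Mathlib

section
/- Let X : [0,∞) → ℝ² be continuous, twice continuously differentiable on (0,∞), with X(0) = X₀ and Ẋ(t) → 0 as t → 0⁺, satisfying Ẍ(t) + (3/t)·Ẋ(t) + ∇f_{ε,a}(X(t)) = 0 for all t > 0, and let J(t) = det(X(t), Ẋ(t)). If T > 0 is such that X₁(s) ≤ a for all s ≥ T, then the quantity t³·J(t) is constant on [T,∞); explicitly, t³·J(t) = ε·∫₀^T s³·X₂(s)·(X₁(s) − a)₊ ds for all t ≥ T. -/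
/-- `F(0) = 0`, `F(r) = ∫₀^r du/(−log u)` for `0 < r ≤ e⁻²`,
`F(r) = F(e⁻²) + (1/2)(r − e⁻²)` for `r ≥ e⁻²`. -/
noncomputable def F (r : ℝ) : ℝ :=
  if r ≤ Real.exp (-2) then ∫ u in (0:ℝ)..r, 1 / (-Real.log u)
  else (∫ u in (0:ℝ)..Real.exp (-2), 1 / (-Real.log u)) + (1/2) * (r - Real.exp (-2))

/-- `f_{ε,a}(x₁,x₂) = F(√(x₁²+x₂²)) + (ε/2)·((x₁ − a)₊)²`. -/
noncomputable def feps (ε a : ℝ) (x : EuclideanSpace ℝ (Fin 2)) : ℝ :=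
  F (Real.sqrt ((x 0)^2 + (x 1)^2)) + (ε/2) * (max (x 0 - a) 0)^2

/-!
Since `d/dt det(X, Ẋ) = det(X, Ẍ)`, the factor `t³` absorbs the friction term `(3/t)Ẋ`, so the
ODE gives `d/dt (t³ J) = -t³ det(X, ∇f_{ε,a}(X))`. The radial part `F(|x|)` has gradient parallel
to `x`, so only the penalty term contributes, and `-det(x, ∇f_{ε,a}(x)) = ε x₂ (x₁ - a)₊`; this
vanishes once `X₁ ≤ a`. As `t³ J(t) → 0` when `t → 0⁺`, integrating from `0` gives the formula.
-/

open Real Set Filter Topology MeasureTheory intervalIntegral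

theorem intervalIntegrable_one_div_neg_log {r : ℝ} (hr0 : 0 < r) (hr : r ≤ exp (-2)) :
    IntervalIntegrable (fun u => 1 / -log u) volume 0 r := by
  rw [intervalIntegrable_iff, uIoc_of_le hr0.le]
  refine Measure.integrableOn_of_bounded (M := 1 / 2) (by simp [volume_Ioc])
    (measurable_const.div measurable_log.neg).aestronglyMeasurable ?_
  rw [ae_restrict_iff' measurableSet_Ioc]
  filter_upwards with u ⟨hu0, hur⟩
  have hlog : 2 ≤ -log u := by
    have := log_le_log hu0 (hur.trans hr)
    rw [log_exp] at this
    linarith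
  rw [norm_of_nonneg (by positivity)]
  gcongr

theorem hasDerivAt_integral_one_div_neg_log {r : ℝ} (hr0 : 0 < r) (hr : r ≤ exp (-2)) :
    HasDerivAt (fun s => ∫ u in 0..s, 1 / -log u) (1 / -log r) r := by
  have hlog : log r < 0 := log_neg hr0 (hr.trans_lt (exp_lt_one_iff.mpr (by norm_num)))
  exact integral_hasDerivAt_right (intervalIntegrable_one_div_neg_log hr0 hr)
    (measurable_const.div measurable_log.neg).stronglyMeasurable.stronglyMeasurableAtFilter
    (continuousAt_const.div (continuousAt_log hr0.ne').neg (by linarith))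

theorem differentiableAt_F {r : ℝ} (hr : 0 < r) : DifferentiableAt ℝ F r := by
  have haffine (s : ℝ) : HasDerivAt
      (fun s => (∫ u in 0..exp (-2), 1 / -log u) + 1 / 2 * (s - exp (-2))) (1 / 2) s :=
    ((((hasDerivAt_id s).sub_const _).const_mul (1 / 2)).const_add _).congr_deriv (by simp)
  rcases lt_trichotomy r (exp (-2)) with hrc | rfl | hrc
  · refine (hasDerivAt_integral_one_div_neg_log hr hrc.le).differentiableAt
      |>.congr_of_eventuallyEq ?_
    filter_upwards [Iio_mem_nhds hrc] with s hs using if_pos (le_of_lt hs)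
  · have hleft : HasDerivWithinAt F (1 / 2) (Iic (exp (-2))) (exp (-2)) := by
      have h := hasDerivAt_integral_one_div_neg_log hr le_rfl
      rw [log_exp, neg_neg] at h
      exact h.hasDerivWithinAt.congr (fun s hs => if_pos hs) (if_pos le_rfl)
    have hright : HasDerivWithinAt F (1 / 2) (Ici (exp (-2))) (exp (-2)) := by
      refine (haffine _).hasDerivWithinAt.congr (fun s hs => ?_) (by simp [F])
      rcases (mem_Ici.mp hs).eq_or_lt with rfl | hs
      · simp [F]
      · exact if_neg (not_le.mpr hs)
    have h := hleft.union hright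
    rw [Iic_union_Ici, hasDerivWithinAt_univ] at h
    exact h.differentiableAt
  · refine (haffine r).differentiableAt.congr_of_eventuallyEq ?_
    filter_upwards [Ioi_mem_nhds hrc] with s hs using if_neg (not_le.mpr hs)

theorem hasDerivAt_max_zero_sq (u : ℝ) :
    HasDerivAt (fun v : ℝ => max v 0 ^ 2) (2 * max u 0) u := by
  refine hasDerivAt_of_hasDerivAt_of_ne' (x := 0) (g := fun v => 2 * max v 0) (fun y hy => ?_)
    (by fun_prop) (by fun_prop) u
  rcases hy.lt_or_gt with hy | hy
  · refine ((hasDerivAt_const y 0).congr_of_eventuallyEq ?_).congr_deriv (by simp [hy.le])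
    filter_upwards [Iio_mem_nhds hy] with v hv
    simp [(mem_Iio.mp hv).le]
  · refine ((hasDerivAt_pow 2 y).congr_of_eventuallyEq ?_).congr_deriv (by simp [hy.le])
    filter_upwards [Ioi_mem_nhds hy] with v hv
    simp [(mem_Ioi.mp hv).le]

section Gradient

variable {E : Type*} [NormedAddCommGroup E] [InnerProductSpace ℝ E] [CompleteSpace E]
  {f g : E → ℝ} {f' g' x : E}

theorem HasGradientAt.add (hf : HasGradientAt f f' x) (hg : HasGradientAt g g' x) :
    HasGradientAt (fun y => f y + g y) (f' + g') x := by
  rw [hasGradientAt_iff_hasFDerivAt, map_add]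
  exact hf.hasFDerivAt.add hg.hasFDerivAt

theorem hasGradientAt_comp_norm_sq {φ : ℝ → ℝ} {d : ℝ} (hφ : HasDerivAt φ d (‖x‖ ^ 2)) :
    HasGradientAt (fun y => φ (‖y‖ ^ 2)) ((2 * d) • x) x := by
  rw [hasGradientAt_iff_hasFDerivAt]
  refine (hφ.comp_hasFDerivAt x (hasStrictFDerivAt_norm_sq x).hasFDerivAt).congr_fderiv ?_
  ext y
  simp only [smul_apply, coe_innerSL_apply, nsmul_eq_mul, Nat.cast_ofNat,
    smul_eq_mul, map_smul, InnerProductSpace.toDual_apply_apply]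
  ring

end Gradient

theorem EuclideanSpace.hasGradientAt_comp_apply {ι : Type*} [Fintype ι] [DecidableEq ι]
    {ψ : ℝ → ℝ} {d : ℝ} {x : EuclideanSpace ℝ ι} (i : ι) (hψ : HasDerivAt ψ d (x i)) :
    HasGradientAt (fun y => ψ (y i)) (d • EuclideanSpace.single i 1) x := by
  rw [hasGradientAt_iff_hasFDerivAt]
  refine (hψ.comp_hasFDerivAt x (EuclideanSpace.proj (𝕜 := ℝ) i).hasFDerivAt).congr_fderiv ?_
  ext y
  simp [EuclideanSpace.inner_single_left]

theorem feps_eq (ε a : ℝ) :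
    feps ε a = fun x => F (√(‖x‖ ^ 2)) + ε / 2 * max (x 0 - a) 0 ^ 2 := by
  ext x
  simp [feps, EuclideanSpace.real_norm_sq_eq, Fin.sum_univ_two]

theorem hasGradientAt_feps (ε a : ℝ) {x : EuclideanSpace ℝ (Fin 2)} (hx : x ≠ 0) :
    ∃ c : ℝ, HasGradientAt (feps ε a)
      (c • x + (ε * max (x 0 - a) 0) • EuclideanSpace.single 0 1) x := by
  have hradial : DifferentiableAt ℝ (fun s => F √s) (‖x‖ ^ 2) :=
    (differentiableAt_F (by simpa using hx)).comp _
      (differentiableAt_id.sqrt (by simpa using hx))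
  have hpenalty : HasDerivAt (fun v => ε / 2 * max (v - a) 0 ^ 2) (ε * max (x 0 - a) 0) (x 0) :=
    (((hasDerivAt_max_zero_sq _).comp_sub_const _ _).const_mul _).congr_deriv (by ring)
  rw [feps_eq]
  exact ⟨_, (hasGradientAt_comp_norm_sq hradial.hasDerivAt).add
    (EuclideanSpace.hasGradientAt_comp_apply 0 hpenalty)⟩

def det2 (x y : EuclideanSpace ℝ (Fin 2)) : ℝ := x 0 * y 1 - x 1 * y 0

section det2

variable {x y : ℝ → EuclideanSpace ℝ (Fin 2)}

theorem HasDerivAt.det2 {x' y' : EuclideanSpace ℝ (Fin 2)} {t : ℝ} (hx : HasDerivAt x x' t)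
    (hy : HasDerivAt y y' t) :
    HasDerivAt (fun s => det2 (x s) (y s)) (det2 x' (y t) + det2 (x t) y') t := by
  have hcoord {z : ℝ → EuclideanSpace ℝ (Fin 2)} {z'} (hz : HasDerivAt z z' t) (i : Fin 2) :
      HasDerivAt (fun s => z s i) (z' i) t :=
    (EuclideanSpace.proj (𝕜 := ℝ) i).hasFDerivAt.comp_hasDerivAt t hz
  exact (((hcoord hx 0).mul (hcoord hy 1)).sub ((hcoord hx 1).mul (hcoord hy 0))).congr_deriv
    (by simp only [_root_.det2]; ring)

theorem Filter.Tendsto.det2 {l : Filter ℝ} {x₀ y₀ : EuclideanSpace ℝ (Fin 2)}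
    (hx : Tendsto x l (𝓝 x₀)) (hy : Tendsto y l (𝓝 y₀)) :
    Tendsto (fun s => det2 (x s) (y s)) l (𝓝 (det2 x₀ y₀)) := by
  have hcont : Continuous fun p : EuclideanSpace ℝ (Fin 2) × EuclideanSpace ℝ (Fin 2) =>
      _root_.det2 p.1 p.2 := by
    unfold _root_.det2; fun_prop
  exact (hcont.tendsto _).comp (hx.prodMk_nhds hy)

end det2

theorem det2_gradient_feps (ε a : ℝ) (x : EuclideanSpace ℝ (Fin 2)) :
    det2 x (gradient (feps ε a) x) = -(ε * x 1 * max (x 0 - a) 0) := by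
  rcases eq_or_ne x 0 with rfl | hx
  · simp [det2]
  obtain ⟨c, h⟩ := hasGradientAt_feps ε a hx
  rw [h.gradient]
  simp only [det2, PiLp.add_apply, PiLp.smul_apply, smul_eq_mul, ne_eq, one_ne_zero,
    not_false_eq_true, PiLp.single_eq_of_ne, PiLp.single_eq_same]
  ring

theorem hasDerivAt_pow_mul_det2 (n : ℕ) {G : EuclideanSpace ℝ (Fin 2) → EuclideanSpace ℝ (Fin 2)}
    {X X' X'' : ℝ → EuclideanSpace ℝ (Fin 2)} {t : ℝ} (ht : t ≠ 0)
    (hX : HasDerivAt X (X' t) t) (hX' : HasDerivAt X' (X'' t) t)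
    (hODE : X'' t + (n / t) • X' t + G (X t) = 0) :
    HasDerivAt (fun s => s ^ n * det2 (X s) (X' s)) (-(t ^ n * det2 (X t) (G (X t)))) t := by
  have hX'' : X'' t = -((n / t) • X' t) - G (X t) := by
    rw [← sub_eq_zero, ← hODE]; abel
  have hpow : (n : ℝ) * t ^ (n - 1) = t ^ n * (n / t) := by
    rcases n with _ | n
    · simp
    · field_simp
      simp [pow_succ]
  refine ((hasDerivAt_pow n t).mul (hX.det2 hX')).congr_deriv ?_
  simp only [det2, hX'', PiLp.sub_apply, PiLp.neg_apply, PiLp.smul_apply, smul_eq_mul]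
  linear_combination (X t 0 * X' t 1 - X t 1 * X' t 0) * hpow

theorem angular_momentum_conservation_general (a ε : ℝ)
    (X X' X'' : ℝ → EuclideanSpace ℝ (Fin 2))
    (hXcont : ContinuousOn X (Set.Ici 0))
    (hX' : ∀ t > (0:ℝ), HasDerivAt X (X' t) t)
    (hX'' : ∀ t > (0:ℝ), HasDerivAt X' (X'' t) t)
    (hX'0 : Filter.Tendsto X' (nhdsWithin 0 (Set.Ioi 0)) (nhds 0))
    (hODE : ∀ t > (0:ℝ), X'' t + (3 / t) • X' t + gradient (feps ε a) (X t) = 0)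
    (J : ℝ → ℝ) (hJ : ∀ t, J t = X t 0 * X' t 1 - X t 1 * X' t 0)
    (T : ℝ) (hT : 0 < T) (hrad : ∀ s ≥ T, X s 0 ≤ a) :
    ∀ t ≥ T,
      t ^ 3 * J t = ε * ∫ s in (0:ℝ)..T, s ^ 3 * X s 1 * max (X s 0 - a) 0 := by
  intro t htT
  have ht : 0 < t := hT.trans_le htT
  have hJdet : J = fun s => det2 (X s) (X' s) := funext hJ
  set torque : ℝ → ℝ := fun s => s ^ 3 * X s 1 * max (X s 0 - a) 0
  have hderiv : ∀ s > 0, HasDerivAt (fun s => s ^ 3 * J s) (ε * torque s) s := by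
    intro s hs
    have h := hasDerivAt_pow_mul_det2 3 hs.ne' (hX' s hs) (hX'' s hs) (by exact_mod_cast hODE s hs)
    rw [det2_gradient_feps] at h
    exact hJdet ▸ h.congr_deriv (by ring)
  have hlim : Tendsto (fun s => s ^ 3 * J s) (𝓝[>] 0) (𝓝 0) := by
    have hX : Tendsto X (𝓝[>] 0) (𝓝 (X 0)) :=
      (continuousWithinAt_Ioi_iff_Ici.mpr (hXcont 0 self_mem_Ici)).tendsto
    have hcube : Tendsto (fun s : ℝ => s ^ 3) (𝓝[>] 0) (𝓝 0) :=
      ((continuous_pow 3).tendsto' 0 0 (by simp)).mono_left nhdsWithin_le_nhds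
    simpa [hJdet] using hcube.mul (hX.det2 hX'0)
  have hint {c d : ℝ} (hc : 0 ≤ c) (hd : 0 ≤ d) : IntervalIntegrable torque volume c d := by
    refine ContinuousOn.intervalIntegrable fun s hs => ?_
    have hXs : ContinuousWithinAt X (uIcc c d) s :=
      hXcont.mono (fun u hu => (le_min hc hd).trans hu.1) s hs
    fun_prop
  have hvanish : ∀ s ∈ uIcc T t, torque s = 0 := by
    intro s hs
    rw [uIcc_of_le htT] at hs
    simp [torque, max_eq_right (sub_nonpos.mpr (hrad s hs.1))]
  calc t ^ 3 * J t = ∫ s in 0..t, ε * torque s := by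
        rw [integral_eq_sub_of_hasDerivAt_of_tendsto ht (fun s hs => hderiv s hs.1)
          ((hint le_rfl ht.le).const_mul ε) hlim
          ((hderiv t ht).continuousAt.tendsto.mono_left nhdsWithin_le_nhds), sub_zero]
    _ = ε * ∫ s in 0..T, torque s := by
        rw [intervalIntegral.integral_const_mul,
          ← integral_add_adjacent_intervals (hint le_rfl hT.le) (hint hT.le ht.le),
          integral_congr hvanish, intervalIntegral.integral_zero, add_zero]

/-- along a solution `X` of the Nesterov flow for `f_{ε,a}`, with
`J(t) = det(X(t), Ẋ(t))`, if `T > 0` is such that `X₁(s) ≤ a` for all `s ≥ T`, then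
`t³·J(t) = ε·∫₀^T s³·X₂(s)·(X₁(s) − a)₊ ds` for all `t ≥ T`; in particular `t³·J(t)`
is constant on `[T,∞)`. -/
theorem angular_momentum_conservation (a ε : ℝ) (ha : 0 < a) (hε : 0 < ε)
    (X₀ : EuclideanSpace ℝ (Fin 2)) (X X' X'' : ℝ → EuclideanSpace ℝ (Fin 2))
    (hXcont : ContinuousOn X (Set.Ici 0))
    (hX' : ∀ t > (0:ℝ), HasDerivAt X (X' t) t)
    (hX'' : ∀ t > (0:ℝ), HasDerivAt X' (X'' t) t)
    (hX''cont : ContinuousOn X'' (Set.Ioi 0))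
    (hX0 : X 0 = X₀)
    (hX'0 : Filter.Tendsto X' (nhdsWithin 0 (Set.Ioi 0)) (nhds 0))
    (hODE : ∀ t > (0:ℝ), X'' t + (3 / t) • X' t + gradient (feps ε a) (X t) = 0)
    (J : ℝ → ℝ) (hJ : ∀ t, J t = X t 0 * X' t 1 - X t 1 * X' t 0)
    (T : ℝ) (hT : 0 < T) (hrad : ∀ s ≥ T, X s 0 ≤ a) :
    ∀ t ≥ T,
      t ^ 3 * J t = ε * ∫ s in (0:ℝ)..T, s ^ 3 * X s 1 * max (X s 0 - a) 0 :=
  angular_momentum_conservation_general a ε X X' X'' hXcont hX' hX'' hX'0 hODE J hJ T hT hrad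
end

section
/- Let f : ℝ^d → ℝ be convex and continuously differentiable with f(0) = 0 = min f. Let X : [0,∞) → ℝ^d be continuous, twice continuously differentiable on (0,∞), with X(0) = X₀ and Ẋ(t) → 0 as t → 0⁺, satisfying Ẍ(t) + (3/t)·Ẋ(t) + ∇f(X(t)) = 0 for all t > 0. Then f(X(t)) ≤ 2‖X₀‖²/t² for all t > 0. -/
/-!
The energy `E(t) = t² (f(X t) - f z) + 2‖X t - z + (t/2) Ẋ t‖²` is nonincreasing along the flow,
for every point `z`: the friction coefficient `3/t` makes the `Ẍ` and `Ẋ` terms of the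
derivative of the second summand cancel, leaving `E'(t) = 2t (f(X) - f(z) - ⟪∇f(X), X - z⟫)`,
which is `≤ 0` by the first-order characterisation of convexity. As `t → 0⁺`, `E(t) → 2‖X₀ - z‖²`,
and taking `z = 0` gives `t² f(X t) ≤ E(t) ≤ 2‖X₀‖²`.
-/

open Set Filter Topology
open scoped RealInnerProductSpace

variable {E : Type*} [NormedAddCommGroup E] [InnerProductSpace ℝ E]

theorem ConvexOn.sub_le_inner_of_hasGradientAt [CompleteSpace E] {f : E → ℝ} {f' x : E}
    (hconv : ConvexOn ℝ univ f) (hf : HasGradientAt f f' x) (y : E) :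
    f x - f y ≤ ⟪f', x - y⟫ := by
  have hline : ConvexOn ℝ univ (f ∘ AffineMap.lineMap (k := ℝ) y x) := by
    simpa using hconv.comp_affineMap (AffineMap.lineMap y x : ℝ →ᵃ[ℝ] E)
  have hf1 : HasGradientAt f f' (AffineMap.lineMap (k := ℝ) y x 1) := by
    rwa [AffineMap.lineMap_apply_one]
  have hderiv : HasDerivAt (f ∘ AffineMap.lineMap (k := ℝ) y x) ⟪f', x - y⟫ 1 := by
    simpa [InnerProductSpace.toDual_apply_apply] using
      hf1.hasFDerivAt.comp_hasDerivAt 1 AffineMap.hasDerivAt_lineMap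
  simpa [slope] using hline.slope_le_of_hasDerivAt (mem_univ 0) (mem_univ 1) one_pos hderiv

theorem AntitoneOn.le_of_tendsto_nhdsGT {α β : Type*} [LinearOrder α] [TopologicalSpace α]
    [OrderTopology α] [DenselyOrdered α] [Preorder β] [TopologicalSpace β]
    [ClosedIciTopology β] {g : α → β} {a b : α} {L : β} (hg : AntitoneOn g (Ioi a))
    (hlim : Tendsto g (𝓝[>] a) (𝓝 L)) (hab : a < b) : g b ≤ L := by
  have := nhdsGT_neBot_of_exists_gt ⟨b, hab⟩
  exact ge_of_tendsto hlim <|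
    mem_of_superset (Ioo_mem_nhdsGT hab) fun _ hs => hg hs.1 hab hs.2.le

noncomputable def nesterovEnergy (f : E → ℝ) (z : E) (X X' : ℝ → E) (t : ℝ) : ℝ :=
  t ^ 2 * (f (X t) - f z) + 2 * ‖X t - z + (t / 2) • X' t‖ ^ 2

section NesterovFlow

variable {f : E → ℝ} {z : E} {X X' X'' : ℝ → E}

theorem hasDerivAt_nesterovEnergy [CompleteSpace E] {t : ℝ} (ht : t ≠ 0)
    (hf : DifferentiableAt ℝ f (X t)) (hX' : HasDerivAt X (X' t) t) (hX'' : HasDerivAt X' (X'' t) t)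
    (hODE : X'' t + (3 / t) • X' t + gradient f (X t) = 0) :
    HasDerivAt (nesterovEnergy f z X X')
      (2 * t * (f (X t) - f z - ⟪gradient f (X t), X t - z⟫)) t := by
  set g := gradient f (X t) with hg
  have hfX : HasDerivAt (fun s => f (X s) - f z) ⟪g, X' t⟫ t := by
    simpa [hg, gradient, InnerProductSpace.toDual_symm_apply] using
      (hf.hasFDerivAt.comp_hasDerivAt t hX').sub_const (f z)
  have hshift : HasDerivAt (fun s => X s - z + (s / 2) • X' s) (-((t / 2) • g)) t := by
    have hX''_eq : X'' t = -((3 / t) • X' t + g) := by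
      rw [add_assoc] at hODE
      exact eq_neg_of_add_eq_zero_left hODE
    have h : HasDerivAt (fun s => X s - z + (s / 2) • X' s)
        (X' t + ((t / 2) • X'' t + (1 / 2 : ℝ) • X' t)) t :=
      (hX'.sub_const z).add (((hasDerivAt_id t).div_const 2).smul hX'')
    convert h using 1
    rw [hX''_eq, smul_neg, smul_add, smul_smul, div_mul_div_comm, mul_comm t 3,
      mul_div_mul_right _ _ ht]
    module
  refine (((hasDerivAt_pow 2 t).mul hfX).add (hshift.norm_sq.const_mul 2)).congr_deriv ?_
  simp only [inner_add_left, inner_neg_right, real_inner_smul_left, real_inner_smul_right,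
    inner_sub_left, inner_sub_right, real_inner_comm (X' t) g, real_inner_comm (X t) g,
    real_inner_comm z g]
  ring

theorem antitoneOn_nesterovEnergy [CompleteSpace E] (hconv : ConvexOn ℝ univ f)
    (hf : Differentiable ℝ f)
    (hX' : ∀ t > 0, HasDerivAt X (X' t) t) (hX'' : ∀ t > 0, HasDerivAt X' (X'' t) t)
    (hODE : ∀ t > 0, X'' t + (3 / t) • X' t + gradient f (X t) = 0) :
    AntitoneOn (nesterovEnergy f z X X') (Ioi 0) := by
  have hderiv : ∀ t ∈ Ioi (0 : ℝ), HasDerivAt (nesterovEnergy f z X X')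
      (2 * t * (f (X t) - f z - ⟪gradient f (X t), X t - z⟫)) t := fun t ht =>
    hasDerivAt_nesterovEnergy (ne_of_gt ht) (hf _) (hX' t ht) (hX'' t ht) (hODE t ht)
  refine antitoneOn_of_hasDerivWithinAt_nonpos (convex_Ioi 0)
    (f' := fun t => 2 * t * (f (X t) - f z - ⟪gradient f (X t), X t - z⟫))
    (fun t ht => (hderiv t ht).continuousAt.continuousWithinAt) (fun t ht => ?_) fun t ht => ?_
  · exact (hderiv t (interior_subset ht)).hasDerivWithinAt
  · rw [interior_Ioi, mem_Ioi] at ht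
    have hgrad := hconv.sub_le_inner_of_hasGradientAt (hf (X t)).hasGradientAt z
    exact mul_nonpos_of_nonneg_of_nonpos (by positivity) (by linarith)

theorem tendsto_nesterovEnergy_nhdsGT_zero {X₀ : E} (hf : ContinuousAt f X₀)
    (hX : Tendsto X (𝓝[>] 0) (𝓝 X₀)) (hX' : Tendsto X' (𝓝[>] 0) (𝓝 0)) :
    Tendsto (nesterovEnergy f z X X') (𝓝[>] 0) (𝓝 (2 * ‖X₀ - z‖ ^ 2)) := by
  have ht : Tendsto (fun t : ℝ => t) (𝓝[>] 0) (𝓝 0) := nhdsWithin_le_nhds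
  have hshift : Tendsto (fun t => X t - z + (t / 2) • X' t) (𝓝[>] 0) (𝓝 (X₀ - z)) := by
    simpa using (hX.sub_const z).add ((ht.div_const 2).smul hX')
  unfold nesterovEnergy
  simpa using ((ht.pow 2).mul ((hf.tendsto.comp hX).sub_const (f z))).add
    ((hshift.norm.pow 2).const_mul 2)

theorem sq_mul_sub_le_of_nesterovFlow [CompleteSpace E] {X₀ : E} (hconv : ConvexOn ℝ univ f)
    (hf : Differentiable ℝ f) (hX' : ∀ t > 0, HasDerivAt X (X' t) t)
    (hX'' : ∀ t > 0, HasDerivAt X' (X'' t) t)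
    (hODE : ∀ t > 0, X'' t + (3 / t) • X' t + gradient f (X t) = 0)
    (hX : Tendsto X (𝓝[>] 0) (𝓝 X₀)) (hX'0 : Tendsto X' (𝓝[>] 0) (𝓝 0)) {t : ℝ} (ht : 0 < t) :
    t ^ 2 * (f (X t) - f z) ≤ 2 * ‖X₀ - z‖ ^ 2 := by
  have hE := (antitoneOn_nesterovEnergy (z := z) hconv hf hX' hX'' hODE).le_of_tendsto_nhdsGT
    (tendsto_nesterovEnergy_nhdsGT_zero (hf X₀).continuousAt hX hX'0) ht
  have hnorm : 0 ≤ 2 * ‖X t - z + (t / 2) • X' t‖ ^ 2 := by positivity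
  unfold nesterovEnergy at hE
  linarith

end NesterovFlow

theorem nesterov_function_value_rate_general (d : ℕ)
    (f : EuclideanSpace ℝ (Fin d) → ℝ)
    (hconv : ConvexOn ℝ Set.univ f) (hf : ContDiff ℝ 1 f)
    (hf0 : f 0 = 0)
    (X₀ : EuclideanSpace ℝ (Fin d)) (X X' X'' : ℝ → EuclideanSpace ℝ (Fin d))
    (hXcont : ContinuousOn X (Set.Ici 0))
    (hX' : ∀ t > (0:ℝ), HasDerivAt X (X' t) t)
    (hX'' : ∀ t > (0:ℝ), HasDerivAt X' (X'' t) t)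
    (hX0 : X 0 = X₀)
    (hX'0 : Filter.Tendsto X' (nhdsWithin 0 (Set.Ioi 0)) (nhds 0))
    (hODE : ∀ t > (0:ℝ), X'' t + (3 / t) • X' t + gradient f (X t) = 0) :
    ∀ t > (0:ℝ), f (X t) ≤ 2 * ‖X₀‖ ^ 2 / t ^ 2 := by
  intro t ht
  have hX : Tendsto X (𝓝[>] 0) (𝓝 X₀) :=
    hX0 ▸ ((hXcont 0 self_mem_Ici).mono Ioi_subset_Ici_self).tendsto
  have hbound := sq_mul_sub_le_of_nesterovFlow (z := 0) hconv (hf.differentiable one_ne_zero)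
    hX' hX'' hODE hX hX'0 ht
  rw [hf0, sub_zero, sub_zero] at hbound
  rw [le_div_iff₀ (by positivity)]
  linarith

/-- along a solution of the critical Nesterov flow for a convex `C¹`
potential `f` with `f(0) = 0 = min f`, one has `f(X(t)) ≤ 2‖X₀‖²/t²` for all `t > 0`. -/
theorem nesterov_function_value_rate (d : ℕ)
    (f : EuclideanSpace ℝ (Fin d) → ℝ)
    (hconv : ConvexOn ℝ Set.univ f) (hf : ContDiff ℝ 1 f)
    (hf0 : f 0 = 0) (hmin : ∀ x, 0 ≤ f x)
    (X₀ : EuclideanSpace ℝ (Fin d)) (X X' X'' : ℝ → EuclideanSpace ℝ (Fin d))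
    (hXcont : ContinuousOn X (Set.Ici 0))
    (hX' : ∀ t > (0:ℝ), HasDerivAt X (X' t) t)
    (hX'' : ∀ t > (0:ℝ), HasDerivAt X' (X'' t) t)
    (hX''cont : ContinuousOn X'' (Set.Ioi 0))
    (hX0 : X 0 = X₀)
    (hX'0 : Filter.Tendsto X' (nhdsWithin 0 (Set.Ioi 0)) (nhds 0))
    (hODE : ∀ t > (0:ℝ), X'' t + (3 / t) • X' t + gradient f (X t) = 0) :
    ∀ t > (0:ℝ), f (X t) ≤ 2 * ‖X₀‖ ^ 2 / t ^ 2 :=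
  nesterov_function_value_rate_general d f hconv hf hf0 X₀ X X' X'' hXcont hX' hX'' hX0 hX'0 hODE
end
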